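/- The subStraTT logical relation respects conversion: if A ⇔ B (A and B are joinable under parallel reduction) and ⟦A⟧_k holds, then ⟦B⟧_k holds, and if a ∈ ⟦A⟧_k then a ∈ ⟦B⟧_k. -/
import Mathlib


/-! subStraTT without global definitions, in de Bruijn representation:
a single universe ⋆ with type-in-type, stratified dependent function types
`Πx:^j A. B`, abstractions, applications, the empty type and its eliminator.
Levels are natural numbers. -/

inductive Tm : Type
  | star
  | var (x : ℕ)
  | pi (j : ℕ) (A B : Tm)
  | lam (b : Tm)
  | app (b a : Tm)
  | bot
  | absurd (b : Tm)
  deriving DecidableEq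

namespace Tm

/-- Shift free de Bruijn indices `≥ c` up by `d`. -/
def shift (d c : ℕ) : Tm → Tm
  | star => star
  | var x => if x < c then var x else var (x + d)
  | pi j A B => pi j (shift d c A) (shift d (c + 1) B)
  | lam b => lam (shift d (c + 1) b)
  | app b a => app (shift d c b) (shift d c a)
  | bot => bot
  | absurd b => absurd (shift d c b)

/-- Substitute `u` for de Bruijn index `k` (decrementing greater indices). -/
def subst (k : ℕ) (u : Tm) : Tm → Tm
  | star => star
  | var x => if x < k then var x else if x = k then shift k 0 u else var (x - 1)
  | pi j A B => pi j (subst k u A) (subst (k + 1) u B)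
  | lam b => lam (subst (k + 1) u b)
  | app b a => app (subst k u b) (subst k u a)
  | bot => bot
  | absurd b => absurd (subst k u b)

end Tm

/-- Parallel reduction `a ⇒ b`: all visible β-redexes may be reduced
simultaneously in one step. -/
inductive Par : Tm → Tm → Prop
  | star : Par .star .star
  | var (x) : Par (.var x) (.var x)
  | bot : Par .bot .bot
  | pi {j A A' B B'} : Par A A' → Par B B' → Par (.pi j A B) (.pi j A' B')
  | lam {b b'} : Par b b' → Par (.lam b) (.lam b')
  | app {b b' a a'} : Par b b' → Par a a' → Par (.app b a) (.app b' a')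
  | beta {b b' a a'} : Par b b' → Par a a' →
      Par (.app (.lam b) a) (Tm.subst 0 a' b')
  | absurd {b b'} : Par b b' → Par (.absurd b) (.absurd b')

/-- `a ⇒* b`: reflexive–transitive closure of parallel reduction. -/
def Pars : Tm → Tm → Prop := Relation.ReflTransGen Par

/-- Joinability `a ⇔ b`: `a` and `b` parallel-reduce to a common term. -/
def Conv (a b : Tm) : Prop := ∃ c, Pars a c ∧ Pars b c

/-- Untyped definitional equality `a ≡ b`: the least reflexive, symmetric,
transitive congruence containing β-equivalence. -/
inductive DEq : Tm → Tm → Prop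
  | refl (a) : DEq a a
  | sym : DEq a b → DEq b a
  | trans : DEq a b → DEq b c → DEq a c
  | beta (b a) : DEq (.app (.lam b) a) (Tm.subst 0 a b)
  | pi {j A A' B B'} : DEq A A' → DEq B B' → DEq (.pi j A B) (.pi j A' B')
  | lam {b b'} : DEq b b' → DEq (.lam b) (.lam b')
  | app {b b' a a'} : DEq b b' → DEq a a' → DEq (.app b a) (.app b' a')
  | absurd {b b'} : DEq b b' → DEq (.absurd b) (.absurd b')

/-! The logical relation, stratified by well-founded induction on levels:
an inductive predicate `⟦A⟧ₖ` on closed types (`U`), parametrized by the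
membership relation at strictly lower levels, together with a membership
relation `a ∈ ⟦A⟧ₖ` (`elU`) defined by recursion on the derivation of `⟦A⟧ₖ`;
the knot is tied by well-founded recursion on the level `k` (`el`). -/

/-- Inductive predicate on closed types at level `k`, with rules for `⋆`, `⊥`,
stratified dependent function types (domain at a strictly lower level `j < k`,
codomain interpreted at all members of the domain), and closure under parallel
reduction. `el` is the membership relation at strictly lower levels. -/
inductive U (el : ℕ → Tm → Tm → Prop) : ℕ → Tm → Type
  | star {k} : U el k .star
  | bot {k} : U el k .bot
  | pi {k j A B} : j < k → U el j A →
      (∀ y, el j A y → U el k (Tm.subst 0 y B)) → U el k (.pi j A B)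
  | red {k A B} : Par A B → U el k B → U el k A

/-- Membership `a ∈ ⟦A⟧ₖ`, by recursion on the derivation of `⟦A⟧ₖ`:
`A ∈ ⟦⋆⟧ₖ` iff `⟦A⟧ₖ`; `a ∈ ⟦⊥⟧ₖ` is false; `f ∈ ⟦Πx:^j A. B⟧ₖ` iff for all
`y ∈ ⟦A⟧ⱼ`, `f y ∈ ⟦B{y/x}⟧ₖ`; membership is preserved along reduction. -/
def elU {el : ℕ → Tm → Tm → Prop} {k : ℕ} : {A : Tm} → U el k A → Tm → Prop
  | _, .star, a => Nonempty (U el k a)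
  | _, .bot, _ => False
  | _, .pi _ _ hB, f => ∀ y hy, elU (hB y hy) (Tm.app f y)
  | _, .red _ h, a => elU h a

/-- The membership relation `a ∈ ⟦A⟧ₖ`, tying the knot by well-founded
recursion on the level `k`. -/
def el (k : ℕ) (A a : Tm) : Prop :=
  ∃ h : U (fun j B b => if h' : j < k then el j B b else False) k A, elU h a
termination_by k
decreasing_by all_goals exact h'

/-- Membership at strictly lower levels than `k`. -/
def lowEl (k : ℕ) : ℕ → Tm → Tm → Prop :=
  fun j B b => if h' : j < k then el j B b else False

/-- The type interpretation `⟦A⟧ₖ` is defined (inhabited). -/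
def interpTy (k : ℕ) (A : Tm) : Prop :=
  Nonempty (U (lowEl k) k A)


namespace Tm

theorem shift_merge (t : Tm) : ∀ d d' c c', c ≤ c' → c' ≤ c + d →
    shift d' c' (shift d c t) = shift (d + d') c t := by
  induction t with intro d d' c c' h1 h2
  | var x =>
    by_cases hx : x < c
    · simp only [shift, if_pos hx, if_pos (lt_of_lt_of_le hx h1)]
    · simp only [shift, if_neg hx, if_neg (by omega : ¬ x + d < c')]
      congr 1; omega
  | pi j A B ihA ihB =>
    simp only [shift]
    rw [ihA _ _ _ _ h1 h2, ihB _ _ _ _ (by omega) (by omega)]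
  | lam b ih => simp only [shift]; rw [ih _ _ _ _ (by omega) (by omega)]
  | app b a ihb iha => simp only [shift]; rw [ihb _ _ _ _ h1 h2, iha _ _ _ _ h1 h2]
  | absurd b ih => simp only [shift]; rw [ih _ _ _ _ h1 h2]
  | star => rfl
  | bot => rfl

theorem shift_comm (t : Tm) : ∀ d c d' c', c' ≤ c →
    shift d' c' (shift d c t) = shift d (c + d') (shift d' c' t) := by
  induction t with intro d c d' c' h1
  | var x =>
    by_cases hx : x < c'
    · simp only [shift, if_pos hx, if_pos (by omega : x < c), if_pos (by omega : x < c + d')]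
    · by_cases hx2 : x < c
      · simp only [shift, if_pos hx2, if_neg hx, if_pos (by omega : x + d' < c + d')]
      · simp only [shift, if_neg hx2, if_neg hx, if_neg (by omega : ¬ x + d < c'),
          if_neg (by omega : ¬ x + d' < c + d')]
        congr 1; omega
  | pi j A B ihA ihB =>
    simp only [shift]
    rw [ihA _ _ _ _ h1, ihB _ _ _ _ (by omega)]
    congr 2; omega
  | lam b ih => simp only [shift]; rw [ih _ _ _ _ (by omega)]; congr 2; omega
  | app b a ihb iha => simp only [shift]; rw [ihb _ _ _ _ h1, iha _ _ _ _ h1]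
  | absurd b ih => simp only [shift]; rw [ih _ _ _ _ h1]
  | star => rfl
  | bot => rfl

/-- L4 -/
theorem shift_subst (t : Tm) : ∀ k u d c, k ≤ c →
    shift d c (subst k u t) = subst k (shift d (c - k) u) (shift d (c + 1) t) := by
  induction t with intro k u d c h1
  | var x =>
    rcases lt_trichotomy x k with hx | hx | hx
    · simp only [subst, shift, if_pos hx, if_pos (by omega : x < c),
        if_pos (by omega : x < c + 1)]
    · simp only [subst, shift, if_pos (by omega : x < c + 1), if_neg (by omega : ¬ x < k),
        if_pos (by omega : x = k)]
      rw [shift_comm u d (c - k) k 0 (by omega)]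
      congr 1; omega
    · by_cases hx2 : x < c + 1
      · simp only [subst, shift, if_neg (by omega : ¬ x < k), if_neg (by omega : ¬ x = k),
          if_pos (by omega : x - 1 < c), if_pos hx2]
      · simp only [subst, shift, if_neg (by omega : ¬ x < k), if_neg (by omega : ¬ x = k),
          if_neg (by omega : ¬ x - 1 < c), if_neg hx2,
          if_neg (by omega : ¬ x + d < k), if_neg (by omega : ¬ x + d = k)]
        congr 1; omega
  | pi j A B ihA ihB =>
    simp only [shift, subst]
    rw [ihA _ _ _ _ h1, ihB _ _ _ _ (by omega)]
    congr 3 <;> omega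
  | lam b ih => simp only [shift, subst]; rw [ih _ _ _ _ (by omega)]; congr 3 <;> omega
  | app b a ihb iha => simp only [shift, subst]; rw [ihb _ _ _ _ h1, iha _ _ _ _ h1]
  | absurd b ih => simp only [shift, subst]; rw [ih _ _ _ _ h1]
  | star => rfl
  | bot => rfl

/-- L6 -/
theorem subst_shift (t : Tm) : ∀ d c k v, c + d ≤ k →
    subst k v (shift d c t) = shift d c (subst (k - d) v t) := by
  induction t with intro d c k v h1
  | var x =>
    by_cases hx : x < c
    · simp only [shift, subst, if_pos hx, if_pos (by omega : x < k),
        if_pos (by omega : x < k - d)]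
    · rcases lt_trichotomy x (k - d) with hx2 | hx2 | hx2
      · simp only [shift, subst, if_neg hx, if_pos hx2, if_pos (by omega : x + d < k)]
      · simp only [shift, subst, if_neg hx, if_neg (by omega : ¬ x + d < k),
          if_pos (by omega : x + d = k), if_neg (by omega : ¬ x < k - d),
          if_pos (by omega : x = k - d)]
        rw [shift_merge v (k - d) d 0 c (by omega) (by omega)]
        congr 1; omega
      · simp only [shift, subst, if_neg hx, if_neg (by omega : ¬ x + d < k),
          if_neg (by omega : ¬ x + d = k), if_neg (by omega : ¬ x < k - d),
          if_neg (by omega : ¬ x = k - d), if_neg (by omega : ¬ x - 1 < c)]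
        congr 1; omega
  | pi j A B ihA ihB =>
    simp only [shift, subst]
    rw [ihA _ _ _ _ h1, ihB _ _ _ _ (by omega)]
    congr 3 <;> omega
  | lam b ih => simp only [shift, subst]; rw [ih _ _ _ _ (by omega)]; congr 3 <;> omega
  | app b a ihb iha => simp only [shift, subst]; rw [ihb _ _ _ _ h1, iha _ _ _ _ h1]
  | absurd b ih => simp only [shift, subst]; rw [ih _ _ _ _ h1]
  | star => rfl
  | bot => rfl

/-- L7 -/
theorem subst_shift_cancel (t : Tm) : ∀ d c k v, c ≤ k → k < c + d →
    subst k v (shift d c t) = shift (d - 1) c t := by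
  induction t with intro d c k v h1 h2
  | var x =>
    by_cases hx : x < c
    · simp only [shift, subst, if_pos hx, if_pos (by omega : x < k)]
    · simp only [shift, subst, if_neg hx, if_neg (by omega : ¬ x + d < k),
        if_neg (by omega : ¬ x + d = k)]
      congr 1; omega
  | pi j A B ihA ihB =>
    simp only [shift, subst]
    rw [ihA _ _ _ _ h1 h2, ihB _ _ _ _ (by omega) (by omega)]
  | lam b ih => simp only [shift, subst]; rw [ih _ _ _ _ (by omega) (by omega)]
  | app b a ihb iha => simp only [shift, subst]; rw [ihb _ _ _ _ h1 h2, iha _ _ _ _ h1 h2]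
  | absurd b ih => simp only [shift, subst]; rw [ih _ _ _ _ h1 h2]
  | star => rfl
  | bot => rfl

/-- L5 -/
theorem subst_subst (t : Tm) : ∀ k j u v, j ≤ k →
    subst k v (subst j u t) = subst j (subst (k - j) v u) (subst (k + 1) v t) := by
  induction t with intro k j u v h1
  | var x =>
    rcases lt_trichotomy x j with hx | hx | hx
    · simp only [subst, if_pos hx, if_pos (by omega : x < k), if_pos (by omega : x < k + 1)]
    · simp only [subst, if_pos (by omega : x < k + 1), if_neg (by omega : ¬ x < j),
        if_pos (by omega : x = j)]
      rw [subst_shift u j 0 k v (by omega)]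
    · rcases lt_trichotomy x (k + 1) with hx2 | hx2 | hx2
      · simp only [subst, if_neg (by omega : ¬ x < j), if_neg (by omega : ¬ x = j),
          if_pos (by omega : x - 1 < k), if_pos hx2]
      · simp only [subst, if_neg (by omega : ¬ x < j), if_neg (by omega : ¬ x = j),
          if_neg (by omega : ¬ x - 1 < k), if_pos (by omega : x - 1 = k),
          if_neg (by omega : ¬ x < k + 1), if_pos (by omega : x = k + 1)]
        rw [subst_shift_cancel v (k + 1) 0 j _ (by omega) (by omega)]
        congr 1
      · simp only [subst, if_neg (by omega : ¬ x < j), if_neg (by omega : ¬ x = j),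
          if_neg (by omega : ¬ x - 1 < k), if_neg (by omega : ¬ x - 1 = k),
          if_neg (by omega : ¬ x < k + 1), if_neg (by omega : ¬ x = k + 1),
          if_neg (by omega : ¬ x - 1 < j), if_neg (by omega : ¬ x - 1 = j)]
  | pi j' A B ihA ihB =>
    simp only [subst]
    rw [ihA _ _ _ _ h1, ihB _ _ _ _ (by omega)]
    congr 3 <;> omega
  | lam b ih => simp only [subst]; rw [ih _ _ _ _ (by omega)]; congr 3 <;> omega
  | app b a ihb iha => simp only [subst]; rw [ihb _ _ _ _ h1, iha _ _ _ _ h1]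
  | absurd b ih => simp only [subst]; rw [ih _ _ _ _ h1]
  | star => rfl
  | bot => rfl

end Tm

namespace ParStuff
open Tm

theorem par_refl (a : Tm) : Par a a := by
  induction a
  case star => exact Par.star
  case var x => exact Par.var x
  case pi j A B ihA ihB => exact Par.pi ihA ihB
  case lam b ih => exact Par.lam ih
  case app b a ihb iha => exact Par.app ihb iha
  case bot => exact Par.bot
  case absurd b ih => exact Par.absurd ih

theorem par_shift {a b : Tm} (h : Par a b) : ∀ d c, Par (shift d c a) (shift d c b) := by
  induction h with intro d c
  | star => exact Par.star
  | var x => simp only [shift]; split <;> [exact Par.var x; exact Par.var (x + d)]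
  | bot => exact Par.bot
  | pi hA hB ihA ihB => exact Par.pi (ihA d c) (ihB d (c + 1))
  | lam hb ih => exact Par.lam (ih d (c + 1))
  | app hb ha ihb iha => exact Par.app (ihb d c) (iha d c)
  | beta hb ha ihb iha =>
    simp only [shift]
    rw [shift_subst _ 0 _ d c (by omega)]
    simp only [Nat.sub_zero]
    exact Par.beta (ihb d (c + 1)) (iha d c)
  | absurd hb ih => exact Par.absurd (ih d c)

theorem par_subst {t t' u u' : Tm} (ht : Par t t') (hu : Par u u') :
    ∀ k, Par (Tm.subst k u t) (Tm.subst k u' t') := by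
  induction ht with intro k
  | star => exact Par.star
  | var x =>
    simp only [Tm.subst]
    split
    · exact Par.var x
    · split
      · exact par_shift hu k 0
      · exact Par.var (x - 1)
  | bot => exact Par.bot
  | pi hA hB ihA ihB => exact Par.pi (ihA k) (ihB (k + 1))
  | lam hb ih => exact Par.lam (ih (k + 1))
  | app hb ha ihb iha => exact Par.app (ihb k) (iha k)
  | beta hb ha ihb iha =>
    simp only [Tm.subst]
    rw [subst_subst _ k 0 _ _ (by omega)]
    simp only [Nat.sub_zero]
    exact Par.beta (ihb (k + 1)) (iha k)
  | absurd hb ih => exact Par.absurd (ih k)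

/-- Complete development. -/
def cd : Tm → Tm
  | .star => .star
  | .var x => .var x
  | .pi j A B => .pi j (cd A) (cd B)
  | .lam b => .lam (cd b)
  | .app (.lam b) a => Tm.subst 0 (cd a) (cd b)
  | .app (.star) a => .app (cd .star) (cd a)
  | .app (.var x) a => .app (cd (.var x)) (cd a)
  | .app (.pi j A B) a => .app (cd (.pi j A B)) (cd a)
  | .app (.app b c) a => .app (cd (.app b c)) (cd a)
  | .app (.bot) a => .app (cd .bot) (cd a)
  | .app (.absurd b) a => .app (cd (.absurd b)) (cd a)
  | .bot => .bot
  | .absurd b => .absurd (cd b)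

theorem triangle {a b : Tm} (h : Par a b) : Par b (cd a) := by
  induction h with
  | star => exact Par.star
  | var x => exact Par.var x
  | bot => exact Par.bot
  | pi hA hB ihA ihB => exact Par.pi ihA ihB
  | lam hb ih => exact Par.lam ih
  | app hb ha ihb iha =>
    rename_i b b' a a'
    cases b with
    | lam b0 =>
      cases hb with
      | lam hb0 =>
        rename_i b0'
        simp only [cd]
        cases ihb with
        | lam ih0 => exact Par.beta ih0 iha
    | star => exact Par.app ihb iha
    | var x => exact Par.app ihb iha
    | pi j A B => exact Par.app ihb iha
    | app b c => exact Par.app ihb iha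
    | bot => exact Par.app ihb iha
    | absurd b => exact Par.app ihb iha
  | beta hb ha ihb iha =>
    simp only [cd]
    exact par_subst ihb iha 0
  | absurd hb ih => exact Par.absurd ih

theorem diamond {a b c : Tm} (h1 : Par a b) (h2 : Par a c) :
    ∃ d, Par b d ∧ Par c d :=
  ⟨cd a, triangle h1, triangle h2⟩

theorem strip {a b c : Tm} (h1 : Par a b) (h2 : Pars a c) :
    ∃ d, Pars b d ∧ Par c d := by
  induction h2 generalizing b with
  | refl => exact ⟨b, Relation.ReflTransGen.refl, h1⟩
  | tail _ hcd ih =>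
    obtain ⟨e, hbe, hce⟩ := ih h1
    obtain ⟨f, hef, hdf⟩ := diamond hce hcd
    exact ⟨f, hbe.tail hef, hdf⟩

theorem confluence {a b c : Tm} (h1 : Pars a b) (h2 : Pars a c) :
    ∃ d, Pars b d ∧ Pars c d := by
  induction h1 with
  | refl => exact ⟨c, h2, Relation.ReflTransGen.refl⟩
  | tail hab0 hbd ih =>
    obtain ⟨e, hbe, hce⟩ := ih
    obtain ⟨f, hbf, hef⟩ := strip hbd hbe
    exact ⟨f, hbf, hce.tail hef⟩

end ParStuff

namespace ParStuff

theorem pars_star {c : Tm} (h : Pars .star c) : c = .star := by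
  induction h with
  | refl => rfl
  | tail _ hp ih => subst ih; cases hp; rfl

theorem pars_bot {c : Tm} (h : Pars .bot c) : c = .bot := by
  induction h with
  | refl => rfl
  | tail _ hp ih => subst ih; cases hp; rfl

theorem pars_pi {j : ℕ} {A B c : Tm} (h : Pars (.pi j A B) c) :
    ∃ A' B', c = .pi j A' B' ∧ Pars A A' ∧ Pars B B' := by
  induction h with
  | refl => exact ⟨A, B, rfl, Relation.ReflTransGen.refl, Relation.ReflTransGen.refl⟩
  | tail _ hp ih =>
    obtain ⟨A1, B1, rfl, hA1, hB1⟩ := ih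
    cases hp with
    | pi hA hB => exact ⟨_, _, rfl, hA1.tail hA, hB1.tail hB⟩

theorem conv_refl (a : Tm) : Conv a a :=
  ⟨a, Relation.ReflTransGen.refl, Relation.ReflTransGen.refl⟩

theorem conv_symm {a b : Tm} (h : Conv a b) : Conv b a :=
  ⟨h.choose, h.choose_spec.2, h.choose_spec.1⟩

theorem conv_trans {a b c : Tm} (h1 : Conv a b) (h2 : Conv b c) : Conv a c := by
  obtain ⟨d, had, hbd⟩ := h1
  obtain ⟨e, hbe, hce⟩ := h2
  obtain ⟨f, hdf, hef⟩ := confluence hbd hbe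
  exact ⟨f, had.trans hdf, hce.trans hef⟩

theorem par_conv {a b : Tm} (h : Par a b) : Conv a b :=
  ⟨b, Relation.ReflTransGen.single h, Relation.ReflTransGen.refl⟩

theorem pars_conv {a b : Tm} (h : Pars a b) : Conv a b :=
  ⟨b, h, Relation.ReflTransGen.refl⟩

theorem conv_star_bot : ¬ Conv Tm.star Tm.bot := by
  rintro ⟨d, h1, h2⟩
  rw [pars_star h1] at h2
  exact absurd (pars_bot h2) (by simp)

theorem conv_star_pi {j : ℕ} {A B : Tm} : ¬ Conv Tm.star (Tm.pi j A B) := by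
  rintro ⟨d, h1, h2⟩
  obtain ⟨A', B', rfl, -, -⟩ := pars_pi h2
  exact absurd (pars_star h1) (by simp)

theorem conv_bot_pi {j : ℕ} {A B : Tm} : ¬ Conv Tm.bot (Tm.pi j A B) := by
  rintro ⟨d, h1, h2⟩
  obtain ⟨A', B', rfl, -, -⟩ := pars_pi h2
  exact absurd (pars_bot h1) (by simp)

theorem conv_pi_inj {j j' : ℕ} {A B A' B' : Tm}
    (h : Conv (Tm.pi j A B) (Tm.pi j' A' B')) : j = j' ∧ Conv A A' ∧ Conv B B' := by
  obtain ⟨d, h1, h2⟩ := h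
  obtain ⟨A1, B1, rfl, hA1, hB1⟩ := pars_pi h1
  obtain ⟨A2, B2, he, hA2, hB2⟩ := pars_pi h2
  injection he with hj hA hB
  subst hj; subst hA; subst hB
  exact ⟨rfl, ⟨A1, hA1, hA2⟩, ⟨B1, hB1, hB2⟩⟩

theorem pars_subst {t t' : Tm} (h : Pars t t') (u : Tm) (k : ℕ) :
    Pars (Tm.subst k u t) (Tm.subst k u t') := by
  induction h with
  | refl => exact Relation.ReflTransGen.refl
  | tail _ hp ih => exact ih.tail (par_subst hp (par_refl u) k)

theorem conv_subst {t t' : Tm} (h : Conv t t') (u : Tm) (k : ℕ) :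
    Conv (Tm.subst k u t) (Tm.subst k u t') := by
  obtain ⟨d, h1, h2⟩ := h
  exact ⟨_, pars_subst h1 u k, pars_subst h2 u k⟩

theorem U_par_fwd {el : ℕ → Tm → Tm → Prop}
    (hel : ∀ j C D b, Par C D → el j D b → el j C b) :
    ∀ {k A}, U el k A → ∀ {B}, Par A B → Nonempty (U el k B) := by
  intro k A h
  induction h with
  | star => intro B hB; cases hB; exact ⟨U.star⟩
  | bot => intro B hB; cases hB; exact ⟨U.bot⟩
  | pi hj hA hB ihA ihB =>
    intro B hB
    cases hB with
    | pi hA' hB' =>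
      obtain ⟨hA1'⟩ := ihA hA'
      refine ⟨U.pi hj hA1' (fun y hy => ?_)⟩
      have hy' := hel _ _ _ y hA' hy
      exact (ihB y hy' (par_subst hB' (par_refl y) 0)).some
  | red hp h ih =>
    intro B hB
    obtain ⟨d, hd1, hd2⟩ := diamond hp hB
    obtain ⟨hd⟩ := ih hd1
    exact ⟨U.red hd2 hd⟩

theorem U_pars_fwd {el : ℕ → Tm → Tm → Prop}
    (hel : ∀ j C D b, Par C D → el j D b → el j C b)
    {k A B} (h : U el k A) (hp : Pars A B) : Nonempty (U el k B) := by
  induction hp with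
  | refl => exact ⟨h⟩
  | tail _ hq ih => exact U_par_fwd hel ih.some hq

theorem U_pars_bwd {el : ℕ → Tm → Tm → Prop}
    {k A B} (hp : Pars A B) : ∀ _h : U el k B, Nonempty (U el k A) := by
  induction hp with
  | refl => exact fun h => ⟨h⟩
  | tail hq hr ih => exact fun h => ih (U.red hr h)

end ParStuff

namespace ParStuff

theorem U_canon {el : ℕ → Tm → Tm → Prop} :
    ∀ {k B} (h2 : U el k B),
      (∃ _ : Pars B .star, ∀ a, elU h2 a ↔ Nonempty (U el k a)) ∨
      (∃ _ : Pars B .bot, ∀ a, ¬ elU h2 a) ∨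
      Nonempty (Σ' (j : ℕ) (A1 B1 : Tm) (_hj : PLift (j < k)) (_hA : U el j A1)
         (hB : ∀ y, el j A1 y → U el k (Tm.subst 0 y B1)),
         Pars B (.pi j A1 B1) ∧
           ∀ a, (elU h2 a ↔ ∀ y hy, elU (hB y hy) (.app a y))) := by
  intro k B h2
  induction h2 with
  | star => exact Or.inl ⟨Relation.ReflTransGen.refl, fun a => Iff.rfl⟩
  | bot => exact Or.inr (Or.inl ⟨Relation.ReflTransGen.refl, fun a ha => ha⟩)
  | pi hj hA hB ihA ihB =>
    exact Or.inr (Or.inr ⟨_, _, _, ⟨hj⟩, hA, hB, Relation.ReflTransGen.refl,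
      fun a => Iff.rfl⟩)
  | red hp h ih =>
    rcases ih with ⟨hq, hiff⟩ | ⟨hq, hiff⟩ | ⟨⟨j, A1, B1, hj, hA, hB, hq, hiff⟩⟩
    · exact Or.inl ⟨(Relation.ReflTransGen.single hp).trans hq, hiff⟩
    · exact Or.inr (Or.inl ⟨(Relation.ReflTransGen.single hp).trans hq, hiff⟩)
    · exact Or.inr (Or.inr ⟨j, A1, B1, hj, hA, hB,
        (Relation.ReflTransGen.single hp).trans hq, hiff⟩)

theorem elU_irrel {el : ℕ → Tm → Tm → Prop}
    (hel : ∀ j C D b, Conv C D → (el j C b ↔ el j D b)) :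
    ∀ {k A} (h1 : U el k A), ∀ {B} (h2 : U el k B), Conv A B →
      ∀ a, elU h1 a ↔ elU h2 a := by
  intro k A h1
  induction h1 with
  | star =>
    intro B h2 hC a
    rcases U_canon h2 with ⟨hq, hiff⟩ | ⟨hq, hiff⟩ | ⟨⟨j, A1, B1, hj, hA, hB, hq, hiff⟩⟩
    · exact (hiff a).symm
    · exact absurd (conv_trans hC (pars_conv hq)) conv_star_bot
    · exact absurd (conv_trans hC (pars_conv hq)) conv_star_pi
  | bot =>
    intro B h2 hC a
    rcases U_canon h2 with ⟨hq, hiff⟩ | ⟨hq, hiff⟩ | ⟨⟨j, A1, B1, hj, hA, hB, hq, hiff⟩⟩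
    · exact absurd (conv_symm (conv_trans hC (pars_conv hq))) conv_star_bot
    · exact iff_of_false (fun h => h) (hiff a)
    · exact absurd (conv_trans hC (pars_conv hq)) conv_bot_pi
  | pi hj hA1 hB1 ihA1 ihB1 =>
    rename_i k j A1 B1
    intro B h2 hC a
    rcases U_canon h2 with ⟨hq, hiff⟩ | ⟨hq, hiff⟩ | ⟨⟨j2, A2, B2, hj2, hA2, hB2, hq, hiff⟩⟩
    · exact absurd (conv_symm (conv_trans hC (pars_conv hq))) conv_star_pi
    · exact absurd (conv_symm (conv_trans hC (pars_conv hq))) conv_bot_pi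
    · obtain ⟨rfl, hCA, hCB⟩ := conv_pi_inj (conv_trans hC (pars_conv hq))
      rw [hiff a]
      show (∀ y hy, elU (hB1 y hy) (.app a y)) ↔ (∀ y hy, elU (hB2 y hy) (.app a y))
      constructor
      · intro h y hy2
        have hy1 : el j A1 y := (hel j A1 A2 y hCA).2 hy2
        exact (ihB1 y hy1 (hB2 y hy2) (conv_subst hCB y 0) (.app a y)).1 (h y hy1)
      · intro h y hy1
        have hy2 : el j A2 y := (hel j A1 A2 y hCA).1 hy1
        exact (ihB1 y hy1 (hB2 y hy2) (conv_subst hCB y 0) (.app a y)).2 (h y hy2)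
  | red hp h1' ih =>
    intro B h2 hC a
    exact ih h2 (conv_trans (conv_symm (par_conv hp)) hC) a

end ParStuff

namespace ParStuff

theorem el_def (k : ℕ) (A a : Tm) :
    el k A a ↔ ∃ h : U (lowEl k) k A, elU h a := by
  rw [el]; exact Iff.rfl

theorem main : ∀ k A B, Conv A B →
    (interpTy k A → interpTy k B) ∧ (∀ a, el k A a → el k B a) := by
  intro k
  induction k using Nat.strong_induction_on with
  | _ k ih =>
    have hel : ∀ j C D b, Conv C D → (lowEl k j C b ↔ lowEl k j D b) := by
      intro j C D b hCD
      unfold lowEl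
      split
      · next h' =>
        exact ⟨fun h => (ih j h' C D hCD).2 b h,
               fun h => (ih j h' D C (conv_symm hCD)).2 b h⟩
      · exact Iff.rfl
    have helPar : ∀ j C D b, Par C D → lowEl k j D b → lowEl k j C b :=
      fun j C D b hp h => (hel j C D b (par_conv hp)).2 h
    intro A B hAB
    obtain ⟨C, hAC, hBC⟩ := hAB
    have mkB : U (lowEl k) k A → Nonempty (U (lowEl k) k B) := by
      intro hA
      obtain ⟨hC⟩ := U_pars_fwd helPar hA hAC
      exact U_pars_bwd hBC hC
    constructor
    · rintro ⟨hA⟩; exact mkB hA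
    · intro a hA
      rw [el_def] at hA ⊢
      obtain ⟨h, he⟩ := hA
      obtain ⟨hB⟩ := mkB h
      exact ⟨hB, (elU_irrel hel h hB ⟨C, hAC, hBC⟩ a).1 he⟩

end ParStuff

/-- **The logical relation respects conversion**: if `A ⇔ B` then `⟦A⟧ₖ`
implies `⟦B⟧ₖ`, and `a ∈ ⟦A⟧ₖ` implies `a ∈ ⟦B⟧ₖ`. -/
theorem lr_conversion {A B : Tm} (hAB : Conv A B) (k : ℕ) (a : Tm) :
    (interpTy k A → interpTy k B) ∧ (el k A a → el k B a) :=
  ⟨(ParStuff.main k A B hAB).1, fun h => (ParStuff.main k A B hAB).2 a h⟩
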